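/- Let L, M, N ⊆ [m] be proper subsets of [m], and let C = C(Δ_L^c, Δ_M^c, Δ_N^c). If max{|L|, |M|, |N|} ≤ m − 2, then C is a minimal code; moreover, if L, M, N are all nonempty, then C is self-orthogonal. -/
import Mathlib


open Finset Polynomial
open scoped Classical

/-- `V m` is the vector space `F₂^m`. -/
abbrev V (m : ℕ) := Fin m → ZMod 2

/-- Dot product `x·y = Σ_i x_i y_i` in `F₂`. -/
def dot {m : ℕ} (x y : V m) : ZMod 2 := ∑ i, x i * y i

/-- `Supp v = {i : v i ≠ 0}`. -/
def supp {m : ℕ} (v : V m) : Finset (Fin m) := Finset.univ.filter fun i => v i ≠ 0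

/-- The simplicial complex `Δ_L = {v : Supp v ⊆ L}` generated by `L`. -/
def Δ {m : ℕ} (L : Finset (Fin m)) : Finset (V m) := Finset.univ.filter fun v => supp v ⊆ L

/-- Hamming weight of a vector. -/
def wtv {ι : Type} [Fintype ι] (c : ι → ZMod 2) : ℕ :=
  (Finset.univ.filter fun i => c i ≠ 0).card

/-- The linear functional `x ↦ x·y`. -/
noncomputable def dotL {m : ℕ} (y : V m) : V m →ₗ[ZMod 2] ZMod 2 :=
  ∑ i, LinearMap.smulRight (LinearMap.proj i) (y i)

/-- The linear map `(α,β,γ) ↦ ((d₁,d₂,d₃) ↦ α·d₁ + (β+γ)·d₂ + β·d₃)` whose range is the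
binary code `C(D₁,D₂,D₃)`. -/
noncomputable def codeMap {m : ℕ} (D₁ D₂ D₃ : Finset (V m)) :
    (V m × V m × V m) →ₗ[ZMod 2]
      (({x // x ∈ D₁} × {x // x ∈ D₂} × {x // x ∈ D₃}) → ZMod 2) :=
  LinearMap.pi fun d =>
    (dotL d.1.1).comp (LinearMap.fst (ZMod 2) (V m) (V m × V m))
    + (dotL d.2.1.1).comp
        (((LinearMap.fst (ZMod 2) (V m) (V m)).comp (LinearMap.snd (ZMod 2) (V m) (V m × V m)))
          + ((LinearMap.snd (ZMod 2) (V m) (V m)).comp (LinearMap.snd (ZMod 2) (V m) (V m × V m))))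
    + (dotL d.2.2.1).comp
        ((LinearMap.fst (ZMod 2) (V m) (V m)).comp (LinearMap.snd (ZMod 2) (V m) (V m × V m)))

lemma codeMap_apply {m : ℕ} (D₁ D₂ D₃ : Finset (V m)) (α β γ : V m)
    (d : {x // x ∈ D₁} × {x // x ∈ D₂} × {x // x ∈ D₃}) :
    codeMap D₁ D₂ D₃ (α, β, γ) d = dot α d.1.1 + dot (β + γ) d.2.1.1 + dot β d.2.2.1 := by
  simp [codeMap, dotL, dot, LinearMap.smulRight, mul_comm]

/-- A binary linear code (given as a set of codewords) is minimal if the support of a nonzero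
codeword never strictly contains the support of another nonzero codeword. -/
def IsMinimalCode {ι : Type} (C : Set (ι → ZMod 2)) : Prop :=
  ∀ u ∈ C, u ≠ 0 → ∀ v ∈ C, v ≠ 0 → Function.support v ⊆ Function.support u → v = u

/-- A binary code is self-orthogonal if any two codewords are orthogonal. -/
def IsSelfOrthogonal {ι : Type} [Fintype ι] (C : Set (ι → ZMod 2)) : Prop :=
  ∀ c ∈ C, ∀ c' ∈ C, ∑ i, c i * c' i = 0


def chi (t : ZMod 2) : ℤ := 1 - 2 * t.val

lemma chi_add : ∀ s t : ZMod 2, chi (s + t) = chi s * chi t := by decide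

lemma chi_sum {ι : Type*} (s : Finset ι) (f : ι → ZMod 2) :
    chi (∑ i ∈ s, f i) = ∏ i ∈ s, chi (f i) := by
  induction s using Finset.cons_induction with
  | empty => simp [chi]
  | cons a s ha ih => rw [Finset.sum_cons, Finset.prod_cons, chi_add, ih]

lemma delta_eq_piFinset {m : ℕ} (L : Finset (Fin m)) :
    Δ L = Fintype.piFinset (fun i => if i ∈ L then (Finset.univ : Finset (ZMod 2)) else {0}) := by
  ext x
  simp only [Δ, supp, Finset.mem_filter, Finset.mem_univ, true_and, Fintype.mem_piFinset,
    Finset.subset_iff]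
  constructor
  · intro h i
    by_cases hi : i ∈ L
    · simp [hi]
    · simp only [hi, if_false, Finset.mem_singleton]
      by_contra hx
      exact hi (h (by simp [hx]))
  · intro h i hi
    by_contra hiL
    have := h i
    rw [if_neg hiL] at this
    simp only [Finset.mem_singleton] at this
    simp only [Finset.mem_filter, Finset.mem_univ, true_and, this, ne_eq,
      not_true_eq_false] at hi

lemma card_delta {m : ℕ} (L : Finset (Fin m)) : (Δ L).card = 2 ^ L.card := by
  rw [delta_eq_piFinset, Fintype.card_piFinset]
  have : ∀ i : Fin m, #(if i ∈ L then (Finset.univ : Finset (ZMod 2)) else {0})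
      = if i ∈ L then 2 else 1 := by
    intro i; by_cases hi : i ∈ L <;> simp [hi]
  rw [Finset.prod_congr rfl (fun i _ => this i), Finset.prod_ite_mem, Finset.univ_inter,
    Finset.prod_const]

lemma sum_chi_delta {m : ℕ} (L : Finset (Fin m)) (α : V m) :
    ∑ x ∈ Δ L, chi (dot α x) = if ∀ i ∈ L, α i = 0 then 2 ^ L.card else 0 := by
  rw [delta_eq_piFinset]
  have h : ∀ x ∈ Fintype.piFinset
      (fun i => if i ∈ L then (Finset.univ : Finset (ZMod 2)) else {0}),
      chi (dot α x) = ∏ i, chi (α i * x i) := fun x _ => by rw [dot, chi_sum]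
  rw [Finset.sum_congr rfl h,
    ← Finset.prod_univ_sum (fun i => if i ∈ L then (Finset.univ : Finset (ZMod 2)) else {0})
      (fun i v => chi (α i * v))]
  have h2 : ∀ i, (∑ v ∈ (if i ∈ L then (Finset.univ : Finset (ZMod 2)) else {0}),
      chi (α i * v)) = if i ∈ L then (1 + chi (α i)) else 1 := by
    intro i
    by_cases hi : i ∈ L
    · simp only [hi, if_true]
      have : ∀ a : ZMod 2, ∑ v : ZMod 2, chi (a * v) = 1 + chi a := by decide
      exact this (α i)
    · simp [hi, chi]
  rw [Finset.prod_congr rfl (fun i _ => h2 i), Finset.prod_ite_mem]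
  rw [Finset.univ_inter]
  by_cases hall : ∀ i ∈ L, α i = 0
  · rw [if_pos hall]
    rw [Finset.prod_congr rfl (fun i hi => by rw [hall i hi])]
    rw [Finset.prod_const]
    norm_num [chi]
  · rw [if_neg hall]
    push_neg at hall
    obtain ⟨i, hi, hne⟩ := hall
    apply Finset.prod_eq_zero hi
    have : ∀ a : ZMod 2, a ≠ 0 → 1 + chi a = 0 := by decide
    exact this _ hne

lemma delta_univ {m : ℕ} : Δ (Finset.univ : Finset (Fin m)) = Finset.univ := by
  ext x; simp [Δ]

lemma sum_chi_univ {m : ℕ} (α : V m) :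
    ∑ x : V m, chi (dot α x) = if α = 0 then 2 ^ m else 0 := by
  have := sum_chi_delta (Finset.univ : Finset (Fin m)) α
  rw [delta_univ, Finset.card_univ, Fintype.card_fin] at this
  rw [this]
  congr 1
  simp only [Finset.mem_univ, true_implies, eq_iff_iff]
  constructor
  · intro h; funext i; exact h i
  · intro h i; rw [h]; rfl

lemma sum_chi_compl {m : ℕ} (L : Finset (Fin m)) (α : V m) :
    ∑ x ∈ (Δ L)ᶜ, chi (dot α x)
      = (if α = 0 then 2 ^ m else 0) - (if ∀ i ∈ L, α i = 0 then 2 ^ L.card else 0) := by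
  have h := Finset.sum_compl_add_sum (Δ L) (fun x => chi (dot α x))
  rw [sum_chi_delta] at h
  rw [← sum_chi_univ α] at *
  linarith [h]

lemma card_compl_delta {m : ℕ} (L : Finset (Fin m)) :
    (((Δ L)ᶜ : Finset (V m)).card : ℤ) = 2 ^ m - 2 ^ L.card := by
  rw [Finset.card_compl, card_delta]
  have h1 : (2:ℕ) ^ L.card ≤ 2 ^ m := Nat.pow_le_pow_right (by norm_num)
    (by
      have := Finset.card_le_card (Finset.subset_univ L)
      simpa using this)
  have hcard : Fintype.card (V m) = 2 ^ m := by
    simp [Fintype.card_fun]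
  rw [hcard]
  push_cast [h1]
  ring

lemma factor_bounds {m : ℕ} (L : Finset (Fin m)) (hL : L.card + 2 ≤ m) (α : V m) :
    (0 : ℤ) < (((Δ L)ᶜ : Finset (V m)).card : ℤ) ∧
    (α = 0 → ∑ x ∈ (Δ L)ᶜ, chi (dot α x) = (((Δ L)ᶜ : Finset (V m)).card : ℤ)) ∧
    (α ≠ 0 → ∑ x ∈ (Δ L)ᶜ, chi (dot α x) ≤ 0 ∧
      -(((Δ L)ᶜ : Finset (V m)).card : ℤ) ≤ 3 * ∑ x ∈ (Δ L)ᶜ, chi (dot α x)) := by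
  have hpow : (4:ℤ) * 2 ^ L.card ≤ 2 ^ m := by
    have : (2:ℤ) ^ (L.card + 2) ≤ 2 ^ m := pow_le_pow_right₀ (by norm_num) hL
    calc (4:ℤ) * 2 ^ L.card = 2 ^ (L.card + 2) := by ring
    _ ≤ 2 ^ m := this
  have hc := card_compl_delta L
  have hpos : (0:ℤ) < 2 ^ L.card := by positivity
  refine ⟨by rw [hc]; linarith, ?_, ?_⟩
  · intro h
    subst h
    rw [sum_chi_compl, hc]
    simp [Pi.zero_apply]
  · intro hα
    rw [sum_chi_compl, if_neg hα, hc]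
    by_cases hall : ∀ i ∈ L, α i = 0
    · rw [if_pos hall]; constructor <;> linarith
    · rw [if_neg hall]; constructor <;> linarith

lemma sum_chi_codeword {m : ℕ} (D₁ D₂ D₃ : Finset (V m)) (α β γ : V m) :
    ∑ d : {x // x ∈ D₁} × {x // x ∈ D₂} × {x // x ∈ D₃},
        chi (codeMap D₁ D₂ D₃ (α, β, γ) d)
      = (∑ x ∈ D₁, chi (dot α x)) *
          ((∑ x ∈ D₂, chi (dot (β + γ) x)) * (∑ x ∈ D₃, chi (dot β x))) := by
  have h : ∀ d : {x // x ∈ D₁} × {x // x ∈ D₂} × {x // x ∈ D₃},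
      chi (codeMap D₁ D₂ D₃ (α, β, γ) d)
        = chi (dot α d.1.1) * (chi (dot (β + γ) d.2.1.1) * chi (dot β d.2.2.1)) := by
    intro d
    rw [codeMap_apply, chi_add, chi_add, mul_assoc]
  rw [Fintype.sum_congr _ _ h]
  rw [Fintype.sum_prod_type]
  simp only [Fintype.sum_prod_type]
  rw [← Finset.sum_coe_sort D₁ (fun x => chi (dot α x)),
      ← Finset.sum_coe_sort D₂ (fun x => chi (dot (β + γ) x)),
      ← Finset.sum_coe_sort D₃ (fun x => chi (dot β x))]
  rw [Finset.sum_mul]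
  refine Finset.sum_congr rfl fun x _ => ?_
  rw [Finset.sum_mul_sum, Finset.mul_sum]
  refine Finset.sum_congr rfl fun y _ => ?_
  rw [Finset.mul_sum]

lemma sum_chi_eq_card {ι : Type} [Fintype ι] (u : ι → ZMod 2) :
    ∑ d, chi (u d) = (Fintype.card ι : ℤ) - 2 * (wtv u : ℤ) := by
  have h : ∀ t : ZMod 2, chi t = 1 - 2 * (if t ≠ 0 then (1:ℤ) else 0) := by decide
  calc ∑ d, chi (u d) = ∑ d, (1 - 2 * (if u d ≠ 0 then (1:ℤ) else 0)) := by
        exact Finset.sum_congr rfl fun d _ => h (u d)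
  _ = (Fintype.card ι : ℤ) - 2 * (wtv u : ℤ) := by
        rw [Finset.sum_sub_distrib, Finset.sum_const, ← Finset.mul_sum, Finset.sum_boole]
        simp [wtv, Finset.card_univ]

lemma wt_add_eq {ι : Type} [Fintype ι] (u v : ι → ZMod 2)
    (h : Function.support v ⊆ Function.support u) :
    wtv u = wtv v + wtv (u + v) := by
  classical
  have key : ∀ a b : ZMod 2, (b ≠ 0 → a ≠ 0) → (a + b ≠ 0 ↔ (a ≠ 0 ∧ b = 0)) := by decide
  have hsub : (Finset.univ.filter fun d => v d ≠ 0) ⊆ (Finset.univ.filter fun d => u d ≠ 0) := by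
    intro d hd
    simp only [Finset.mem_filter, Finset.mem_univ, true_and] at hd ⊢
    exact h hd
  have heq : (Finset.univ.filter fun d => (u + v) d ≠ 0)
      = (Finset.univ.filter fun d => u d ≠ 0) \ (Finset.univ.filter fun d => v d ≠ 0) := by
    ext d
    simp only [Finset.mem_sdiff, Finset.mem_filter, Finset.mem_univ, true_and, Pi.add_apply]
    have hd : v d ≠ 0 → u d ≠ 0 := fun hv => h hv
    rw [key _ _ hd]
    tauto
  have hle := Finset.card_le_card hsub
  unfold wtv
  rw [heq, Finset.card_sdiff_of_subset hsub]
  omega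

lemma case1 (a b c C : ℤ) (ha : 0 < a) (hb : 0 < b) (hC : 0 < C)
    (hc1 : c ≤ 0) (hc2 : -C ≤ 3 * c) :
    9 * (a * (b * c)) ≤ a * (b * C) ∧ -(a * (b * C)) ≤ 3 * (a * (b * c)) := by
  have hab := mul_pos ha hb
  have h1 : (a * b) * c ≤ 0 := mul_nonpos_iff.mpr (Or.inl ⟨hab.le, hc1⟩)
  have h2 : (0:ℤ) ≤ (a * b) * (3 * c + C) := mul_nonneg hab.le (by linarith)
  have h3 := mul_pos hab hC
  constructor <;> nlinarith

lemma case2 (a b c B C : ℤ) (ha : 0 < a) (hB : 0 < B) (hC : 0 < C)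
    (hb1 : b ≤ 0) (hb2 : -B ≤ 3 * b) (hc1 : c ≤ 0) (hc2 : -C ≤ 3 * c) :
    9 * (a * (b * c)) ≤ a * (B * C) ∧ -(a * (B * C)) ≤ 3 * (a * (b * c)) := by
  have hbc : (0:ℤ) ≤ b * c := by nlinarith
  have h9 : 9 * (b * c) ≤ B * C := by
    nlinarith [mul_le_mul (by linarith : -(3*b) ≤ B) (by linarith : -(3*c) ≤ C)
      (by linarith : (0:ℤ) ≤ -(3*c)) hB.le]
  have h1 := mul_le_mul_of_nonneg_left h9 ha.le
  have h2 : (0:ℤ) ≤ a * (b * c) := mul_nonneg ha.le hbc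
  have h3 := mul_pos ha (mul_pos hB hC)
  constructor <;> nlinarith

lemma case3 (a b c A B C : ℤ) (hA : 0 < A) (hB : 0 < B) (hC : 0 < C)
    (ha1 : a ≤ 0) (ha2 : -A ≤ 3 * a) (hb1 : b ≤ 0) (hb2 : -B ≤ 3 * b)
    (hc1 : c ≤ 0) (hc2 : -C ≤ 3 * c) :
    9 * (a * (b * c)) ≤ A * (B * C) ∧ -(A * (B * C)) ≤ 3 * (a * (b * c)) := by
  have hbc : (0:ℤ) ≤ b * c := by nlinarith
  have h9 : 9 * (b * c) ≤ B * C := by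
    nlinarith [mul_le_mul (by linarith : -(3*b) ≤ B) (by linarith : -(3*c) ≤ C)
      (by linarith : (0:ℤ) ≤ -(3*c)) hB.le]
  have habc : a * (b * c) ≤ 0 := mul_nonpos_iff.mpr (Or.inr ⟨ha1, hbc⟩)
  have h27 := mul_le_mul (by linarith : -(3*a) ≤ A) h9 (by linarith) hA.le
  constructor <;> nlinarith

lemma key_int (a b c A B C : ℤ) (hA : 0 < A) (hB : 0 < B) (hC : 0 < C)
    (ha : a = A ∨ (a ≤ 0 ∧ -A ≤ 3 * a))
    (hb : b = B ∨ (b ≤ 0 ∧ -B ≤ 3 * b))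
    (hc : c = C ∨ (c ≤ 0 ∧ -C ≤ 3 * c))
    (hne : a ≤ 0 ∨ b ≤ 0 ∨ c ≤ 0) :
    9 * (a * (b * c)) ≤ A * (B * C) ∧ -(A * (B * C)) ≤ 3 * (a * (b * c)) := by
  rcases ha with rfl | ⟨ha1, ha2⟩ <;> rcases hb with rfl | ⟨hb1, hb2⟩ <;>
    rcases hc with rfl | ⟨hc1, hc2⟩
  · rcases hne with h | h | h <;> [skip; skip; skip] <;> constructor <;> linarith
  · have := case1 a b c C hA hB hC hc1 hc2
    constructor <;> linarith [this.1, this.2]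
  · have := case1 a c b B hA hC hB hb1 hb2
    constructor <;> linarith [this.1, this.2]
  · have := case2 a b c B C hA hB hC hb1 hb2 hc1 hc2
    constructor <;> linarith [this.1, this.2]
  · have := case1 b c a A hB hC hA ha1 ha2
    constructor <;> linarith [this.1, this.2]
  · have := case2 b a c A C hB hA hC ha1 ha2 hc1 hc2
    constructor <;> linarith [this.1, this.2]
  · have := case2 c a b A B hC hA hB ha1 ha2 hb1 hb2
    constructor <;> linarith [this.1, this.2]
  · exact case3 a b c A B C hA hB hC ha1 ha2 hb1 hb2 hc1 hc2

lemma dot_zero_left {m : ℕ} (y : V m) : dot 0 y = 0 := by simp [dot]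

lemma codeword_bound {m : ℕ} {L M N : Finset (Fin m)}
    (hL : L.card + 2 ≤ m) (hM : M.card + 2 ≤ m) (hN : N.card + 2 ≤ m)
    (α β γ : V m) (hne : codeMap (Δ L)ᶜ (Δ M)ᶜ (Δ N)ᶜ (α, β, γ) ≠ 0) :
    9 * ∑ d, chi (codeMap (Δ L)ᶜ (Δ M)ᶜ (Δ N)ᶜ (α, β, γ) d)
        ≤ ((((Δ L)ᶜ : Finset (V m)).card : ℤ) *
            (((((Δ M)ᶜ : Finset (V m)).card : ℤ)) * ((((Δ N)ᶜ : Finset (V m)).card : ℤ)))) ∧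
      -((((Δ L)ᶜ : Finset (V m)).card : ℤ) *
            (((((Δ M)ᶜ : Finset (V m)).card : ℤ)) * ((((Δ N)ᶜ : Finset (V m)).card : ℤ))))
        ≤ 3 * ∑ d, chi (codeMap (Δ L)ᶜ (Δ M)ᶜ (Δ N)ᶜ (α, β, γ) d) := by
  obtain ⟨hA, hA0, hA1⟩ := factor_bounds L hL α
  obtain ⟨hB, hB0, hB1⟩ := factor_bounds M hM (β + γ)
  obtain ⟨hC, hC0, hC1⟩ := factor_bounds N hN β
  rw [sum_chi_codeword]
  have hparams : ¬(α = 0 ∧ β + γ = 0 ∧ β = 0) := by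
    rintro ⟨h1, h2, h3⟩
    apply hne
    funext d
    rw [codeMap_apply, h1, h2, h3, dot_zero_left, dot_zero_left, dot_zero_left]
    simp
  apply key_int
  · exact hA
  · exact hB
  · exact hC
  · by_cases h : α = 0
    · exact Or.inl (hA0 h)
    · exact Or.inr (hA1 h)
  · by_cases h : β + γ = 0
    · exact Or.inl (hB0 h)
    · exact Or.inr (hB1 h)
  · by_cases h : β = 0
    · exact Or.inl (hC0 h)
    · exact Or.inr (hC1 h)
  · by_cases h1 : α = 0
    · by_cases h2 : β + γ = 0
      · have h3 : β ≠ 0 := fun h3 => hparams ⟨h1, h2, h3⟩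
        exact Or.inr (Or.inr (hC1 h3).1)
      · exact Or.inr (Or.inl (hB1 h2).1)
    · exact Or.inl (hA1 h1).1

lemma sum_prod_mul_zero {ι₁ ι₂ ι₃ : Type} [Fintype ι₁] [Fintype ι₂] [Fintype ι₃]
    (h₁ : (Fintype.card ι₁ : ZMod 2) = 0) (h₂ : (Fintype.card ι₂ : ZMod 2) = 0)
    (h₃ : (Fintype.card ι₃ : ZMod 2) = 0)
    (a₁ b₁ : ι₁ → ZMod 2) (a₂ b₂ : ι₂ → ZMod 2) (a₃ b₃ : ι₃ → ZMod 2) :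
    ∑ d : ι₁ × ι₂ × ι₃, (a₁ d.1 + a₂ d.2.1 + a₃ d.2.2) * (b₁ d.1 + b₂ d.2.1 + b₃ d.2.2) = 0 := by
  simp only [Fintype.sum_prod_type]
  have hz : ∀ A B : ZMod 2, ∑ z : ι₃, (A + a₃ z) * (B + b₃ z)
      = A * (∑ z, b₃ z) + (∑ z, a₃ z) * B + ∑ z, a₃ z * b₃ z := by
    intro A B
    simp only [mul_add, add_mul, Finset.sum_add_distrib, Finset.sum_const, Finset.card_univ,
      nsmul_eq_mul, ← Finset.mul_sum, ← Finset.sum_mul, h₃]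
    ring
  rw [Finset.sum_congr rfl (fun x _ => Finset.sum_congr rfl
    (fun y _ => hz (a₁ x + a₂ y) (b₁ x + b₂ y)))]
  simp only [Finset.sum_add_distrib, add_mul, mul_add, ← Finset.sum_mul, ← Finset.mul_sum,
    Finset.sum_const, Finset.card_univ, nsmul_eq_mul, h₁, h₂]
  ring

set_option maxHeartbeats 1000000 in
/-- Theorem 4.2, row 8: if `max{|L|,|M|,|N|} ≤ m − 2` then
`C(Δ_L^c, Δ_M^c, Δ_N^c)` is minimal, and if `L, M, N` are all nonempty it is
self-orthogonal. -/
theorem stmt17 (m : ℕ) (hm : 1 ≤ m) (L M N : Finset (Fin m))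
    (hL : L ⊂ Finset.univ) (hM : M ⊂ Finset.univ) (hN : N ⊂ Finset.univ) :
    (max L.card (max M.card N.card) + 2 ≤ m →
      IsMinimalCode (SetLike.coe (LinearMap.range (codeMap (Δ L)ᶜ (Δ M)ᶜ (Δ N)ᶜ)))) ∧
    (L ≠ ∅ ∧ M ≠ ∅ ∧ N ≠ ∅ →
      IsSelfOrthogonal (SetLike.coe (LinearMap.range (codeMap (Δ L)ᶜ (Δ M)ᶜ (Δ N)ᶜ)))) := by
  constructor
  · intro hmax
    have hL2 : L.card + 2 ≤ m := by
      have := le_max_left L.card (max M.card N.card); omega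
    have hM2 : M.card + 2 ≤ m := by
      have h1 := le_max_right L.card (max M.card N.card)
      have h2 := le_max_left M.card N.card; omega
    have hN2 : N.card + 2 ≤ m := by
      have h1 := le_max_right L.card (max M.card N.card)
      have h2 := le_max_right M.card N.card; omega
    intro u hu hu0 v hv hv0 hsupp
    by_contra hvu
    rw [SetLike.mem_coe, LinearMap.mem_range] at hu hv
    obtain ⟨⟨α₁, β₁, γ₁⟩, rfl⟩ := hu
    obtain ⟨⟨α₂, β₂, γ₂⟩, rfl⟩ := hv
    set f := codeMap (Δ L)ᶜ (Δ M)ᶜ (Δ N)ᶜ with hf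
    set u := f (α₁, β₁, γ₁) with hu'
    set v := f (α₂, β₂, γ₂) with hv'
    have hw : u + v = f (α₁ + α₂, β₁ + β₂, γ₁ + γ₂) := by
      rw [hu', hv', ← map_add]; rfl
    have hw0 : u + v ≠ 0 := by
      intro h
      apply hvu
      funext d
      have : u d + v d = 0 := by rw [← Pi.add_apply, h]; rfl
      have key : ∀ a b : ZMod 2, a + b = 0 → b = a := by decide
      exact key _ _ this
    -- character sums
    have hSu := sum_chi_eq_card u
    have hSv := sum_chi_eq_card v
    have hSw := sum_chi_eq_card (u + v)
    have hwt : wtv u = wtv v + wtv (u + v) := wt_add_eq u v hsupp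
    have hcard : (Fintype.card ({x // x ∈ ((Δ L)ᶜ : Finset (V m))} ×
        {x // x ∈ ((Δ M)ᶜ : Finset (V m))} × {x // x ∈ ((Δ N)ᶜ : Finset (V m))}) : ℤ)
        = ((((Δ L)ᶜ : Finset (V m)).card : ℤ) *
            (((((Δ M)ᶜ : Finset (V m)).card : ℤ)) * ((((Δ N)ᶜ : Finset (V m)).card : ℤ)))) := by
      rw [Fintype.card_prod, Fintype.card_prod, Fintype.card_coe, Fintype.card_coe,
        Fintype.card_coe]
      push_cast; ring
    have hbu := codeword_bound hL2 hM2 hN2 α₁ β₁ γ₁ hu0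
    have hbv := codeword_bound hL2 hM2 hN2 α₂ β₂ γ₂ hv0
    have hbw := codeword_bound hL2 hM2 hN2 (α₁ + α₂) (β₁ + β₂) (γ₁ + γ₂) (hw ▸ hw0)
    rw [← hw] at hbw
    have hT : (0:ℤ) < ((((Δ L)ᶜ : Finset (V m)).card : ℤ) *
            (((((Δ M)ᶜ : Finset (V m)).card : ℤ)) * ((((Δ N)ᶜ : Finset (V m)).card : ℤ)))) := by
      have h1 := (factor_bounds L hL2 α₁).1
      have h2 := (factor_bounds M hM2 α₁).1
      have h3 := (factor_bounds N hN2 α₁).1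
      exact mul_pos h1 (mul_pos h2 h3)
    rw [hcard] at hSu hSv hSw
    have hwtZ : (wtv u : ℤ) = (wtv v : ℤ) + (wtv (u + v) : ℤ) := by exact_mod_cast hwt
    linarith [hbu.2, hbv.1, hbw.1]
  · rintro ⟨hLne, hMne, hNne⟩
    have hcardV : Fintype.card (V m) = 2 ^ m := by simp [Fintype.card_fun]
    have heven : ∀ (K : Finset (Fin m)), K ≠ ∅ →
        ((Fintype.card {x // x ∈ ((Δ K)ᶜ : Finset (V m))} : ZMod 2)) = 0 := by
      intro K hK
      rw [Fintype.card_coe, Finset.card_compl, card_delta, hcardV]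
      rw [ZMod.natCast_eq_zero_iff]
      apply Nat.dvd_sub
      · exact dvd_pow_self 2 (by omega)
      · exact dvd_pow_self 2 (fun h => hK (Finset.card_eq_zero.mp h))
    intro c hc c' hc'
    rw [SetLike.mem_coe, LinearMap.mem_range] at hc hc'
    obtain ⟨⟨α₁, β₁, γ₁⟩, rfl⟩ := hc
    obtain ⟨⟨α₂, β₂, γ₂⟩, rfl⟩ := hc'
    refine Eq.trans ?_ (sum_prod_mul_zero (heven L hLne) (heven M hMne) (heven N hNne)
      (fun x : {x // x ∈ ((Δ L)ᶜ : Finset (V m))} => dot α₁ x.1)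
      (fun x => dot α₂ x.1)
      (fun x : {x // x ∈ ((Δ M)ᶜ : Finset (V m))} => dot (β₁ + γ₁) x.1)
      (fun x => dot (β₂ + γ₂) x.1)
      (fun x : {x // x ∈ ((Δ N)ᶜ : Finset (V m))} => dot β₁ x.1)
      (fun x => dot β₂ x.1))
    exact Finset.sum_congr rfl (fun d _ => by rw [codeMap_apply, codeMap_apply])
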